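/- Let (Ω, F, P) be a probability space, λ ∈ (0,1), and γ, ω_H, ω_L, α_H, α_L, β_H, β_L ≥ 0. Let (hH_n)_{n≥0}, (hL_n)_{n≥0}, (VH_n)_{n≥0}, (VL_n)_{n≥0} be integrable real random variables satisfying, for all n ≥ 1: hH_n = ω_H + γ·hH_{n−1} + (α_H/λ)·VH_{n−1} + (β_H/(1−λ))·VL_{n−1} almost surely, hL_n = ω_L + γ·hL_{n−1} + (α_L/λ)·VH_{n−1} + (β_L/(1−λ))·VL_{n−1} almost surely, together with E[VH_n] = λ·E[hH_n] and E[VL_n] = (1−λ)·E[hL_n] for all n ≥ 0. Then the mean vector m_n := (E[hH_n], E[hL_n]) ∈ ℝ² satisfies the affine recursion m_n = (ω_H, ω_L) + Ã·m_{n−1} with Ã = [[γ + α_H, β_H], [α_L, γ + β_L]]. Moreover, if the operator norm of Ã on Euclidean ℝ² is strictly less than 1, then sup_n (E[hH_n] + E[hL_n]) < ∞. -/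

import Mathlib

open MeasureTheory

/-!
Taking expectations in the two GARCH recursions and substituting `E[VH] = l E[hH]`,
`E[VL] = (1 - l) E[hL]` cancels the scalings `1 / l` and `1 / (1 - l)`, which leaves the
affine recursion `m (n + 1) = ω + Ã m n`. If `‖Ã‖ = r < 1`, then `‖m (n + 1)‖ ≤ ‖ω‖ + r ‖m n‖`,
so `‖m n‖` never exceeds `max ‖m 0‖ (‖ω‖ / (1 - r))`, and each coordinate is bounded by `‖m n‖`.
-/

lemma le_max_div_of_le_add_mul {a : ℕ → ℝ} {b r : ℝ} (hr0 : 0 ≤ r) (hr1 : r < 1)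
    (ha : ∀ n, a (n + 1) ≤ b + r * a n) (n : ℕ) : a n ≤ max (a 0) (b / (1 - r)) := by
  induction n with
  | zero => exact le_max_left _ _
  | succ k ih =>
    have hb : b ≤ max (a 0) (b / (1 - r)) * (1 - r) :=
      (div_le_iff₀ (by linarith)).1 (le_max_right _ _)
    nlinarith [ha k]

lemma norm_le_of_affine_recursion {E : Type*} [SeminormedAddCommGroup E] [NormedSpace ℝ E]
    {T : E →L[ℝ] E} (hT : ‖T‖ < 1) {w : E} {v : ℕ → E} (hv : ∀ n, v (n + 1) = w + T (v n))
    (n : ℕ) : ‖v n‖ ≤ max ‖v 0‖ (‖w‖ / (1 - ‖T‖)) := by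
  refine le_max_div_of_le_add_mul (a := fun k => ‖v k‖) (norm_nonneg T) hT (fun k => ?_) n
  calc ‖v (k + 1)‖ = ‖w + T (v k)‖ := by rw [hv]
    _ ≤ ‖w‖ + ‖T (v k)‖ := norm_add_le _ _
    _ ≤ ‖w‖ + ‖T‖ * ‖v k‖ := by gcongr; exact T.le_opNorm _

section Expectation

variable {Ω : Type*} {m0 : MeasurableSpace Ω} {μ : Measure Ω} [IsProbabilityMeasure μ]

lemma integral_const_add_mul_add_mul_add_mul {f g h : Ω → ℝ} (hf : Integrable f μ)
    (hg : Integrable g μ) (hh : Integrable h μ) (c a b d : ℝ) :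
    ∫ x, c + a * f x + b * g x + d * h x ∂μ =
      c + a * ∫ x, f x ∂μ + b * ∫ x, g x ∂μ + d * ∫ x, h x ∂μ := by
  have hcf : Integrable (fun x => c + a * f x) μ := (integrable_const c).add (hf.const_mul a)
  have hcfg : Integrable (fun x => c + a * f x + b * g x) μ := hcf.add (hg.const_mul b)
  rw [integral_add hcfg (hh.const_mul d), integral_add hcf (hg.const_mul b),
    integral_add (integrable_const c) (hf.const_mul a), integral_const, integral_const_mul,
    integral_const_mul, integral_const_mul, probReal_univ, one_smul]

lemma integral_garch_step {l ω γ α β : ℝ} (hl0 : l ≠ 0) (hl1 : 1 - l ≠ 0)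
    {h' h H L VH VL : Ω → ℝ} (hh : Integrable h μ) (hVHint : Integrable VH μ)
    (hVLint : Integrable VL μ)
    (hrec : h' =ᵐ[μ] fun x => ω + γ * h x + (α / l) * VH x + (β / (1 - l)) * VL x)
    (hVH : ∫ x, VH x ∂μ = l * ∫ x, H x ∂μ) (hVL : ∫ x, VL x ∂μ = (1 - l) * ∫ x, L x ∂μ) :
    ∫ x, h' x ∂μ = ω + γ * ∫ x, h x ∂μ + α * ∫ x, H x ∂μ + β * ∫ x, L x ∂μ := by
  rw [integral_congr_ae hrec, integral_const_add_mul_add_mul_add_mul hh hVHint hVLint, hVH, hVL,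
    ← mul_assoc, ← mul_assoc, div_mul_cancel₀ _ hl0, div_mul_cancel₀ _ hl1]

end Expectation

theorem ogi_mean_vector_recursion_general
    {Ω : Type*} {m0 : MeasurableSpace Ω} {μ : Measure Ω} [IsProbabilityMeasure μ]
    (l : ℝ) (hl0 : 0 < l) (hl1 : l < 1)
    (γ ωH ωL αH αL βH βL : ℝ)
    (hH hL VH VL : ℕ → Ω → ℝ)
    (hHint : ∀ n, Integrable (hH n) μ) (hLint : ∀ n, Integrable (hL n) μ)
    (VHint : ∀ n, Integrable (VH n) μ) (VLint : ∀ n, Integrable (VL n) μ)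
    (hrecH : ∀ n : ℕ, 1 ≤ n → hH n =ᵐ[μ] fun x =>
      ωH + γ * hH (n - 1) x + (αH / l) * VH (n - 1) x + (βH / (1 - l)) * VL (n - 1) x)
    (hrecL : ∀ n : ℕ, 1 ≤ n → hL n =ᵐ[μ] fun x =>
      ωL + γ * hL (n - 1) x + (αL / l) * VH (n - 1) x + (βL / (1 - l)) * VL (n - 1) x)
    (hVH : ∀ n : ℕ, ∫ x, VH n x ∂μ = l * ∫ x, hH n x ∂μ)
    (hVL : ∀ n : ℕ, ∫ x, VL n x ∂μ = (1 - l) * ∫ x, hL n x ∂μ)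
    (Atil : Matrix (Fin 2) (Fin 2) ℝ)
    (hAtil : Atil = !![γ + αH, βH; αL, γ + βL])
    (m : ℕ → Fin 2 → ℝ)
    (hm : ∀ n : ℕ, m n = ![∫ x, hH n x ∂μ, ∫ x, hL n x ∂μ]) :
    (∀ n : ℕ, 1 ≤ n → m n = ![ωH, ωL] + Atil.mulVec (m (n - 1))) ∧
    (‖Matrix.toEuclideanCLM (𝕜 := ℝ) Atil‖ < 1 →
      ∃ B : ℝ, ∀ n : ℕ, (∫ x, hH n x ∂μ) + (∫ x, hL n x ∂μ) ≤ B) := by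
  have hl0' : l ≠ 0 := hl0.ne'
  have hl1' : 1 - l ≠ 0 := (sub_pos.2 hl1).ne'
  have hrec_succ (n : ℕ) : m (n + 1) = ![ωH, ωL] + Atil.mulVec (m n) := by
    have meanH := integral_garch_step hl0' hl1' (hHint n) (VHint n) (VLint n)
      (hrecH (n + 1) n.succ_pos) (hVH n) (hVL n)
    have meanL := integral_garch_step hl0' hl1' (hLint n) (VHint n) (VLint n)
      (hrecL (n + 1) n.succ_pos) (hVH n) (hVL n)
    rw [hm, hm, hAtil, meanH, meanL, Matrix.mulVec_fin_two, Matrix.vec2_add]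
    simp only [Matrix.of_apply, Matrix.cons_val_zero, Matrix.cons_val_one, Matrix.cons_val_fin_one]
    ring_nf
  refine ⟨fun n hn => ?_, fun hT => ?_⟩
  · obtain ⟨k, rfl⟩ : ∃ k, n = k + 1 := ⟨n - 1, by omega⟩
    simpa using hrec_succ k
  set v : ℕ → EuclideanSpace ℝ (Fin 2) := fun n => WithLp.toLp 2 (m n)
  have hv (n : ℕ) :
      v (n + 1) = WithLp.toLp 2 ![ωH, ωL] + Matrix.toEuclideanCLM (𝕜 := ℝ) Atil (v n) := by
    simp only [v, hrec_succ, WithLp.toLp_add, Matrix.toEuclideanCLM_toLp]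
  set C := max ‖v 0‖ (‖WithLp.toLp 2 ![ωH, ωL]‖ / (1 - ‖Matrix.toEuclideanCLM (𝕜 := ℝ) Atil‖))
  refine ⟨2 * C, fun n => ?_⟩
  calc (∫ x, hH n x ∂μ) + (∫ x, hL n x ∂μ) = v n 0 + v n 1 := by simp [v, hm]
    _ ≤ ‖v n‖ + ‖v n‖ := add_le_add ((le_abs_self _).trans (PiLp.norm_apply_le (v n) 0))
        ((le_abs_self _).trans (PiLp.norm_apply_le (v n) 1))
    _ ≤ 2 * C := by linarith [norm_le_of_affine_recursion hT hv n]

/-- The mean vector `m_n = (E[hH_n], E[hL_n])` of the coupled OGI GARCH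
recursions satisfies the deterministic affine recursion
`m_n = (ω_H, ω_L) + Ã m_{n−1}` with `Ã = [[γ+α_H, β_H], [α_L, γ+β_L]]`, and
if `Ã` has operator (spectral) norm `< 1` on Euclidean `ℝ²` then the first
moments `E[hH_n] + E[hL_n]` are uniformly bounded. -/
theorem ogi_mean_vector_recursion
    {Ω : Type*} {m0 : MeasurableSpace Ω} {μ : Measure Ω} [IsProbabilityMeasure μ]
    (l : ℝ) (hl0 : 0 < l) (hl1 : l < 1)
    (γ ωH ωL αH αL βH βL : ℝ)
    (hγ : 0 ≤ γ) (hωH : 0 ≤ ωH) (hωL : 0 ≤ ωL) (hαH : 0 ≤ αH) (hαL : 0 ≤ αL)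
    (hβH : 0 ≤ βH) (hβL : 0 ≤ βL)
    (hH hL VH VL : ℕ → Ω → ℝ)
    (hHint : ∀ n, Integrable (hH n) μ) (hLint : ∀ n, Integrable (hL n) μ)
    (VHint : ∀ n, Integrable (VH n) μ) (VLint : ∀ n, Integrable (VL n) μ)
    (hrecH : ∀ n : ℕ, 1 ≤ n → hH n =ᵐ[μ] fun x =>
      ωH + γ * hH (n - 1) x + (αH / l) * VH (n - 1) x + (βH / (1 - l)) * VL (n - 1) x)
    (hrecL : ∀ n : ℕ, 1 ≤ n → hL n =ᵐ[μ] fun x =>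
      ωL + γ * hL (n - 1) x + (αL / l) * VH (n - 1) x + (βL / (1 - l)) * VL (n - 1) x)
    (hVH : ∀ n : ℕ, ∫ x, VH n x ∂μ = l * ∫ x, hH n x ∂μ)
    (hVL : ∀ n : ℕ, ∫ x, VL n x ∂μ = (1 - l) * ∫ x, hL n x ∂μ)
    (Atil : Matrix (Fin 2) (Fin 2) ℝ)
    (hAtil : Atil = !![γ + αH, βH; αL, γ + βL])
    (m : ℕ → Fin 2 → ℝ)
    (hm : ∀ n : ℕ, m n = ![∫ x, hH n x ∂μ, ∫ x, hL n x ∂μ]) :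
    (∀ n : ℕ, 1 ≤ n → m n = ![ωH, ωL] + Atil.mulVec (m (n - 1))) ∧
    (‖Matrix.toEuclideanCLM (𝕜 := ℝ) Atil‖ < 1 →
      ∃ B : ℝ, ∀ n : ℕ, (∫ x, hH n x ∂μ) + (∫ x, hL n x ∂μ) ≤ B) :=
  ogi_mean_vector_recursion_general (m0 := m0) l hl0 hl1 γ ωH ωL αH αL βH βL hH hL VH VL hHint hLint
    VHint VLint hrecH hrecL hVH hVL Atil hAtil m hm
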